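/- Let v be a solution of the radial ODE ((n-1)/m)((v^m)'' + ((n-1)/r)(v^m)') + αv + βrv' = 0 on (0,∞), v > 0, with v(0) = η > 0, v'(0) = 0. Suppose there exists C₁ > 0 with r² v(r)^(1-m) ≤ C₁ for r ≥ 1. Then for all r > 0: ((n-1)/m) v(r)^m = β ∫_r^∞ s v(s) ds + (α - nβ) ∫_r^∞ s^(1-n) (∫₀^s z^(n-1) v(z) dz) ds, with both integrals convergent. -/

import Mathlib

/-!
Multiplied by `r ^ (n - 1)`, the equation is in divergence form: the flux
`r ^ (n - 1) ((n - 1) / m) (v ^ m)' + β r ^ n v + (α - n β) ∫₀ʳ z ^ (n - 1) v`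
has zero derivative and vanishes at `r = 0`, hence
`((n - 1) / m) (v ^ m)' = -(β r v + (α - n β) r ^ (1 - n) ∫₀ʳ z ^ (n - 1) v)` on `(0, ∞)`.
The bound on `r ^ 2 v ^ (1 - m)` gives `v ≤ C r ^ (-p)` with `p = 2 / (1 - m) ∈ (2, n)`, so both
terms on the right are `O(r ^ (1 - p))`, integrable at infinity, and `v ^ m → 0`. Integrating the
identity over `(r, ∞)` gives the formula.
-/

open Filter Topology MeasureTheory Set Real

noncomputable def radialMass (n : ℕ) (v : ℝ → ℝ) (s : ℝ) : ℝ :=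
  ∫ z in (0 : ℝ)..s, z ^ (n - 1) * v z

lemma le_rpow_mul_rpow_neg_of_sq_mul_rpow_le {x a C s : ℝ} (hx : 0 < x) (ha : 0 < a)
    (hs : 0 < s) (h : s ^ 2 * x ^ a ≤ C) : x ≤ C ^ (1 / a) * s ^ (-(2 / a)) := by
  have hC : 0 < C := lt_of_lt_of_le (by positivity) h
  calc x = (x ^ a) ^ (1 / a) := by rw [← rpow_mul hx.le, mul_one_div_cancel ha.ne', rpow_one]
    _ ≤ (C * s ^ (-2 : ℝ)) ^ (1 / a) := by
        refine rpow_le_rpow (by positivity) ?_ (by positivity)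
        rw [rpow_neg hs.le, ← div_eq_mul_inv, le_div_iff₀ (by positivity), rpow_two]
        linarith
    _ = C ^ (1 / a) * s ^ (-(2 / a)) := by
        rw [mul_rpow hC.le (by positivity), ← rpow_mul hs.le]
        ring_nf

lemma integrableOn_Ioi_of_abs_le_rpow {f : ℝ → ℝ} {r C q : ℝ} (hf : ContinuousOn f (Ici r))
    (hq : q < -1) (hbound : ∀ s, 1 ≤ s → |f s| ≤ C * s ^ q) : IntegrableOn f (Ioi r) := by
  refine ((hf.locallyIntegrableOn measurableSet_Ici).integrableOn_of_isBigO_atTop ?_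
    (integrableAtFilter_rpow_atTop_iff.2 hq)).mono_set Ioi_subset_Ici_self
  refine Asymptotics.IsBigO.of_bound C ?_
  filter_upwards [eventually_ge_atTop 1] with s hs
  rw [Real.norm_eq_abs, Real.norm_of_nonneg (by positivity)]
  exact hbound s hs

lemma hasDerivAt_radialMass (n : ℕ) {v : ℝ → ℝ} (hv : Continuous v) (x : ℝ) :
    HasDerivAt (radialMass n v) (x ^ (n - 1) * v x) x := by
  have hc : Continuous fun z : ℝ => z ^ (n - 1) * v z := (continuous_pow _).mul hv
  exact intervalIntegral.integral_hasDerivAt_right (hc.intervalIntegrable _ _)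
    hc.stronglyMeasurable.stronglyMeasurableAtFilter hc.continuousAt

lemma radialMass_nonneg (n : ℕ) {v : ℝ → ℝ} (hv0 : ∀ s, 0 ≤ s → 0 ≤ v s) {s : ℝ}
    (hs : 0 ≤ s) : 0 ≤ radialMass n v s :=
  intervalIntegral.integral_nonneg hs fun z hz => mul_nonneg (pow_nonneg hz.1 _) (hv0 z hz.1)

section Decay

variable {v : ℝ → ℝ} {C p : ℝ}

lemma integrableOn_Ioi_mul_self_of_le_rpow (hv : Continuous v) (hv0 : ∀ s, 0 ≤ s → 0 ≤ v s)
    (hdecay : ∀ s, 1 ≤ s → v s ≤ C * s ^ (-p)) (hp : 2 < p) (r : ℝ) :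
    IntegrableOn (fun s => s * v s) (Ioi r) := by
  refine integrableOn_Ioi_of_abs_le_rpow (C := C) (q := 1 - p)
    (continuous_id.mul hv).continuousOn (by linarith) fun s hs => ?_
  have hs0 : 0 < s := one_pos.trans_le hs
  calc |s * v s| = s * v s := abs_of_nonneg (mul_nonneg hs0.le (hv0 s hs0.le))
    _ ≤ s * (C * s ^ (-p)) := mul_le_mul_of_nonneg_left (hdecay s hs) hs0.le
    _ = C * s ^ (1 - p) := by rw [sub_eq_add_neg, rpow_add hs0, rpow_one]; ring

lemma radialMass_le_of_le_rpow {n : ℕ} (hn : 1 ≤ n) (hv : Continuous v)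
    (hv0 : ∀ s, 0 ≤ s → 0 ≤ v s) (hdecay : ∀ s, 1 ≤ s → v s ≤ C * s ^ (-p)) (hpn : p < n)
    {s : ℝ} (hs : 1 ≤ s) :
    radialMass n v s ≤ (radialMass n v 1 + C / (n - p)) * s ^ ((n : ℝ) - p) := by
  have hnp : 0 < (n : ℝ) - p := by linarith
  have hC : 0 ≤ C := by simpa using (hv0 1 zero_le_one).trans (hdecay 1 le_rfl)
  have hc : Continuous fun z : ℝ => z ^ (n - 1) * v z := (continuous_pow _).mul hv
  have hsplit : radialMass n v s = radialMass n v 1 + ∫ z in (1 : ℝ)..s, z ^ (n - 1) * v z :=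
    (intervalIntegral.integral_add_adjacent_intervals (hc.intervalIntegrable 0 1)
      (hc.intervalIntegrable 1 s)).symm
  have hmaj : ∫ z in (1 : ℝ)..s, z ^ (n - 1) * v z
      ≤ ∫ z in (1 : ℝ)..s, C * z ^ ((n : ℝ) - p - 1) := by
    refine intervalIntegral.integral_mono_on hs (hc.intervalIntegrable 1 s)
      (ContinuousOn.intervalIntegrable fun z hz => ?_) fun z hz => ?_
    · have hz0 : 0 < z := one_pos.trans_le (uIcc_of_le hs ▸ hz).1
      exact (continuousAt_const.mul
        (continuousAt_rpow_const z _ (Or.inl hz0.ne'))).continuousWithinAt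
    · have hz0 : 0 < z := one_pos.trans_le hz.1
      calc z ^ (n - 1) * v z ≤ z ^ (n - 1) * (C * z ^ (-p)) :=
            mul_le_mul_of_nonneg_left (hdecay z hz.1) (by positivity)
        _ = C * z ^ ((n : ℝ) - p - 1) := by
            rw [← rpow_natCast, Nat.cast_sub hn, Nat.cast_one, mul_left_comm, ← rpow_add hz0]
            ring_nf
  have hint : ∫ z in (1 : ℝ)..s, C * z ^ ((n : ℝ) - p - 1)
      = C / (n - p) * (s ^ ((n : ℝ) - p) - 1) := by
    rw [intervalIntegral.integral_const_mul, integral_rpow (Or.inl (by linarith)),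
      sub_add_cancel, one_rpow]
    ring
  have hs1 : 1 ≤ s ^ ((n : ℝ) - p) := one_le_rpow hs hnp.le
  have hG1 := radialMass_nonneg n hv0 zero_le_one
  have hCnp : 0 ≤ C / (n - p) := by positivity
  nlinarith

lemma integrableOn_Ioi_rpow_mul_radialMass_of_le_rpow {n : ℕ} (hn : 1 ≤ n) (hv : Continuous v)
    (hv0 : ∀ s, 0 ≤ s → 0 ≤ v s) (hdecay : ∀ s, 1 ≤ s → v s ≤ C * s ^ (-p)) (hp : 2 < p)
    (hpn : p < n) {r : ℝ} (hr : 0 < r) :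
    IntegrableOn (fun s => s ^ ((1 : ℝ) - n) * radialMass n v s) (Ioi r) := by
  have hcont : ContinuousOn (fun s => s ^ ((1 : ℝ) - n) * radialMass n v s) (Ici r) :=
    fun s hs => ((continuousAt_rpow_const s _ (Or.inl (hr.trans_le hs).ne')).mul
      (hasDerivAt_radialMass n hv s).continuousAt).continuousWithinAt
  refine integrableOn_Ioi_of_abs_le_rpow hcont (C := radialMass n v 1 + C / (n - p)) (q := 1 - p)
    (by linarith) fun s hs => ?_
  have hs0 : 0 < s := one_pos.trans_le hs
  calc |s ^ ((1 : ℝ) - n) * radialMass n v s| = s ^ ((1 : ℝ) - n) * radialMass n v s :=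
        abs_of_nonneg (mul_nonneg (by positivity) (radialMass_nonneg n hv0 hs0.le))
    _ ≤ s ^ ((1 : ℝ) - n) * ((radialMass n v 1 + C / (n - p)) * s ^ ((n : ℝ) - p)) :=
        mul_le_mul_of_nonneg_left (radialMass_le_of_le_rpow hn hv hv0 hdecay hpn hs)
          (by positivity)
    _ = (radialMass n v 1 + C / (n - p)) * s ^ (1 - p) := by
        rw [mul_left_comm, ← rpow_add hs0]
        ring_nf

lemma tendsto_rpow_atTop_of_le_rpow {m : ℝ} (hv0 : ∀ s, 0 ≤ s → 0 ≤ v s)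
    (hdecay : ∀ s, 1 ≤ s → v s ≤ C * s ^ (-p)) (hp : 0 < p) (hm : 0 < m) :
    Tendsto (fun s => v s ^ m) atTop (𝓝 0) := by
  have hv : Tendsto v atTop (𝓝 0) := by
    refine squeeze_zero' (eventually_atTop.2 ⟨0, hv0⟩) (eventually_atTop.2 ⟨1, hdecay⟩) ?_
    simpa using (tendsto_rpow_neg_atTop hp).const_mul C
  simpa [zero_rpow hm.ne'] using hv.rpow_const (Or.inr hm.le)

end Decay

lemma differentiableAt_deriv_rpow_const {v : ℝ → ℝ} {m x : ℝ} (hv : ContDiff ℝ 2 v)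
    (hx : v x ≠ 0) : DifferentiableAt ℝ (deriv fun s => v s ^ m) x := by
  have hU : IsOpen {y | v y ≠ 0} := isOpen_ne_fun hv.continuous continuous_const
  have hw : ContDiffOn ℝ 2 (fun s => v s ^ m) {y | v y ≠ 0} := fun y hy =>
    (hv.contDiffAt.rpow_const_of_ne hy).contDiffWithinAt
  exact ((hw.deriv_of_isOpen hU (by norm_num : (1 : WithTop ℕ∞) + 1 ≤ 2)).differentiableOn
    one_ne_zero).differentiableAt (hU.mem_nhds hx)

lemma hasDerivAt_radialFlux {n : ℕ} (hn : 2 ≤ n) {a α β x u' v' : ℝ} {u v : ℝ → ℝ}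
    (hv : Continuous v) (hu : HasDerivAt u u' x) (hvd : HasDerivAt v v' x) (hx : x ≠ 0)
    (hode : a * (u' + ((n : ℝ) - 1) / x * u x) + α * v x + β * x * v' = 0) :
    HasDerivAt (fun y => y ^ (n - 1) * (a * u y) + β * (y ^ n * v y)
      + (α - n * β) * radialMass n v y) 0 x := by
  have h := (((hasDerivAt_pow (n - 1) x).mul (hu.const_mul a)).add
    (((hasDerivAt_pow n x).mul hvd).const_mul β)).add
    ((hasDerivAt_radialMass n hv x).const_mul (α - n * β))
  refine h.congr_deriv ?_
  obtain ⟨k, rfl⟩ : ∃ k, n = k + 2 := ⟨n - 2, by omega⟩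
  simp only [show k + 2 - 1 = k + 1 by omega, show k + 1 - 1 = k by omega]
  field_simp at hode
  push_cast at hode ⊢
  linear_combination x ^ k * hode

lemma hasDerivAt_rpow_of_radial_ode {n : ℕ} (hn : 2 ≤ n) {m α β : ℝ} {v : ℝ → ℝ}
    (hv : ContDiff ℝ 2 v) (hpos : ∀ r, 0 ≤ r → 0 < v r)
    (hode : ∀ r, 0 < r →
      ((n : ℝ) - 1) / m * (deriv (deriv (fun s => v s ^ m)) r
        + (((n : ℝ) - 1) / r) * deriv (fun s => v s ^ m) r)
      + α * v r + β * r * deriv v r = 0)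
    {x : ℝ} (hx : 0 < x) :
    HasDerivAt (fun s => ((n : ℝ) - 1) / m * v s ^ m)
      (-(β * (x * v x) + (α - n * β) * (x ^ ((1 : ℝ) - n) * radialMass n v x))) x := by
  set a := ((n : ℝ) - 1) / m
  set W := deriv fun s => v s ^ m
  have hW : ∀ y, 0 ≤ y → DifferentiableAt ℝ W y := fun y hy =>
    differentiableAt_deriv_rpow_const hv (hpos y hy).ne'
  set Φ := fun y => y ^ (n - 1) * (a * W y) + β * (y ^ n * v y) + (α - n * β) * radialMass n v y
  have hΦ' : ∀ y ∈ Ioo 0 x, HasDerivAt Φ 0 y := fun y hy =>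
    hasDerivAt_radialFlux hn hv.continuous (hW y hy.1.le).hasDerivAt
      (hv.differentiable (by norm_num) y).hasDerivAt hy.1.ne' (hode y hy.1)
  have hΦc : ContinuousOn Φ (Icc 0 x) := fun y hy =>
    (((continuousAt_id.pow _).mul ((hW y hy.1).continuousAt.const_mul a)).add
      (((continuousAt_id.pow _).mul hv.continuous.continuousAt).const_mul β)).add
      ((hasDerivAt_radialMass n hv.continuous y).continuousAt.const_mul _) |>.continuousWithinAt
  have hΦ0 : Φ 0 = 0 := by
    simp [Φ, radialMass, zero_pow (by omega : n - 1 ≠ 0), zero_pow (by omega : n ≠ 0)]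
  obtain ⟨_, -, hc⟩ := exists_hasDerivAt_eq_slope Φ (fun _ => 0) hx hΦc hΦ'
  have hΦx : Φ x = 0 := by
    rw [eq_comm, div_eq_zero_iff, sub_eq_zero, hΦ0] at hc
    exact hc.resolve_right (by linarith)
  have hv' : HasDerivAt (fun s => v s ^ m) (W x) x :=
    ((hv.contDiffAt.rpow_const_of_ne (hpos x hx.le).ne').differentiableAt
      (by norm_num)).hasDerivAt
  refine (hv'.const_mul a).congr_deriv ?_
  have hxn : x ^ ((1 : ℝ) - n) * x ^ (n - 1) = 1 := by
    rw [← rpow_natCast, Nat.cast_sub (by omega), ← rpow_add hx]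
    simp
  obtain ⟨k, rfl⟩ : ∃ k, n = k + 1 := ⟨n - 1, by omega⟩
  simp only [Φ, Nat.add_sub_cancel] at hΦx hxn
  push_cast at hΦx hxn ⊢
  linear_combination x ^ ((1 : ℝ) - (k + 1)) * hΦx - (a * W x + β * (x * v x)) * hxn

theorem stmt_7_general (n : ℕ) (hn : 3 ≤ n) (m α β : ℝ)
    (hm : 0 < m) (hm2 : m < ((n : ℝ) - 2) / n)
    (v : ℝ → ℝ) (hv : ContDiff ℝ 2 v) (hpos : ∀ r, 0 ≤ r → 0 < v r)
    (hode : ∀ r, 0 < r →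
      ((n : ℝ) - 1) / m * (deriv (deriv (fun s => v s ^ m)) r
        + (((n : ℝ) - 1) / r) * deriv (fun s => v s ^ m) r)
      + α * v r + β * r * deriv v r = 0)
    (C₁ : ℝ) (hw : ∀ r, 1 ≤ r → r ^ 2 * v r ^ (1 - m) ≤ C₁) :
    ∀ r, 0 < r →
      IntegrableOn (fun s => s * v s) (Set.Ioi r) ∧
      IntegrableOn (fun s => s ^ ((1 : ℝ) - n) * ∫ z in (0 : ℝ)..s, z ^ (n - 1) * v z)
        (Set.Ioi r) ∧
      ((n : ℝ) - 1) / m * v r ^ m =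
        β * (∫ s in Set.Ioi r, s * v s)
        + (α - n * β) *
          ∫ s in Set.Ioi r, s ^ ((1 : ℝ) - n) * ∫ z in (0 : ℝ)..s, z ^ (n - 1) * v z := by
  intro r hr
  have hn3 : (3 : ℝ) ≤ n := by exact_mod_cast hn
  have hmn : m * n < n - 2 := (lt_div_iff₀ (by linarith)).1 hm2
  have h1m : 0 < 1 - m := by nlinarith
  have hp2 : 2 < 2 / (1 - m) := by rw [lt_div_iff₀ h1m]; linarith
  have hpn : 2 / (1 - m) < n := by rw [div_lt_iff₀ h1m]; linarith
  have hv0 : ∀ s, 0 ≤ s → 0 ≤ v s := fun s hs => (hpos s hs).le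
  have hdecay : ∀ s, 1 ≤ s → v s ≤ C₁ ^ (1 / (1 - m)) * s ^ (-(2 / (1 - m))) := fun s hs =>
    le_rpow_mul_rpow_neg_of_sq_mul_rpow_le (hpos s (by linarith)) h1m (by linarith) (hw s hs)
  have hI₁ := integrableOn_Ioi_mul_self_of_le_rpow hv.continuous hv0 hdecay hp2 r
  have hI₂ := integrableOn_Ioi_rpow_mul_radialMass_of_le_rpow (by omega) hv.continuous hv0
    hdecay hp2 hpn hr
  have hlim : Tendsto (fun s => ((n : ℝ) - 1) / m * v s ^ m) atTop (𝓝 0) := by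
    simpa using (tendsto_rpow_atTop_of_le_rpow hv0 hdecay (by linarith) hm).const_mul
      (((n : ℝ) - 1) / m)
  have hderiv := fun x (hx : 0 < x) => hasDerivAt_rpow_of_radial_ode (by omega) hv hpos hode hx
  have hint := integral_Ioi_of_hasDerivAt_of_tendsto
    (hderiv r hr).continuousAt.continuousWithinAt (fun x hx => hderiv x (hr.trans hx))
    ((hI₁.const_mul β).add (hI₂.const_mul (α - n * β))).neg hlim
  rw [integral_neg, integral_add (hI₁.const_mul β) (hI₂.const_mul _), integral_const_mul,
    integral_const_mul] at hint
  exact ⟨hI₁, hI₂, by unfold radialMass at hint; linarith⟩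

theorem stmt_7 (n : ℕ) (hn : 3 ≤ n) (m ρ α β η : ℝ)
    (hm : 0 < m) (hm2 : m < ((n : ℝ) - 2) / n) (hρ : 0 < ρ)
    (hα : α = (2 * β + ρ) / (1 - m)) (hη : 0 < η)
    (v : ℝ → ℝ) (hv : ContDiff ℝ 2 v) (hpos : ∀ r, 0 ≤ r → 0 < v r)
    (hode : ∀ r, 0 < r →
      ((n : ℝ) - 1) / m * (deriv (deriv (fun s => v s ^ m)) r
        + (((n : ℝ) - 1) / r) * deriv (fun s => v s ^ m) r)
      + α * v r + β * r * deriv v r = 0)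
    (hv0 : v 0 = η) (hv0d : deriv v 0 = 0)
    (C₁ : ℝ) (hC₁ : 0 < C₁) (hw : ∀ r, 1 ≤ r → r ^ 2 * v r ^ (1 - m) ≤ C₁) :
    ∀ r, 0 < r →
      IntegrableOn (fun s => s * v s) (Set.Ioi r) ∧
      IntegrableOn (fun s => s ^ ((1 : ℝ) - n) * ∫ z in (0 : ℝ)..s, z ^ (n - 1) * v z)
        (Set.Ioi r) ∧
      ((n : ℝ) - 1) / m * v r ^ m =
        β * (∫ s in Set.Ioi r, s * v s)
        + (α - n * β) *
          ∫ s in Set.Ioi r, s ^ ((1 : ℝ) - n) * ∫ z in (0 : ℝ)..s, z ^ (n - 1) * v z :=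
  stmt_7_general n hn m α β hm hm2 v hv hpos hode C₁ hw
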